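/- Let q = 5^a, let K be an algebraic closure of ℚ_5 with valuation ord_5 normalized by ord_5(5) = 1, and ord_q := (1/a)·ord_5. Let α_1, …, α_6 ∈ K be nonzero and set P(T) = ∏_{i=1}^6 (1 − α_i T) = 1 + b_1 T + ⋯ + b_6 T^6. Assume: (i) the multiset {α_1, …, α_6} is stable under α ↦ q/α; (ii) every vertex of the Newton polygon of P (the lower convex hull of the points (n, ord_q b_n), 0 ≤ n ≤ 6, with b_0 = 1) has ordinate an integer multiple of 1/4; (iii) ord_q(b_1) > 5/12, ord_q(b_2) > 5/6, and ord_q(b_3) > 5/4. Then ord_q(α_i) = 1/2 for all i = 1, …, 6. -/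

import Mathlib

/-!
Let `w = ord_q` and let `s = minᵢ w(αᵢ)`, attained by exactly `k` of the `αᵢ`. Since `w q = 1`,
stability under `α ↦ q/α` makes the multiset of the `w(αᵢ)` stable under `x ↦ 1 - x`. If
`s ≥ 1/2` this forces every `w(αᵢ)` to be `1/2`. Otherwise the values `s` and `1 - s` occur
equally often, so `2k ≤ 6`; the coefficient `bₖ` has a unique term of minimal valuation `k s`,
and `(k, k s)` lies on two supporting lines, of slope `s` and of the next larger slope, so it is
a vertex of the Newton polygon. But `k s ∈ (5k/12, k/2)` is not a multiple of `1/4` for `k ≤ 3`.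
-/

open scoped BigOperators

local instance fact5 : Fact (Nat.Prime 5) := ⟨by norm_num⟩

/-- Value at `x` of the lower convex hull (Newton polygon) of the points
`(n, pts n)`, `0 ≤ n ≤ d`, where `pts n ∈ ℝ ∪ {+∞}`. -/
noncomputable def npVal (d : ℕ) (pts : ℕ → WithTop ℝ) (x : ℝ) : ℝ :=
  sSup {y : ℝ | ∃ m c : ℝ,
    (∀ n ∈ Finset.range (d + 1), ((m * n + c : ℝ) : WithTop ℝ) ≤ pts n) ∧
    y = m * x + c}

/-- `(n, npVal d pts n)` is a vertex of the Newton polygon of the points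
`(k, pts k)`, `0 ≤ k ≤ d`. -/
def IsNPVertex (d : ℕ) (pts : ℕ → WithTop ℝ) (n : ℕ) : Prop :=
  n ≤ d ∧ ∃ m c : ℝ,
    (∀ k ∈ Finset.range (d + 1), ((m * k + c : ℝ) : WithTop ℝ) ≤ pts k) ∧
    (m * n + c : ℝ) = npVal d pts n ∧
    ∀ k ≤ d, k ≠ n → (m * k + c : ℝ) < npVal d pts k

open Polynomial Finset Filter Topology

theorem Polynomial.coeff_prod_one_sub_C_mul_X {R ι : Type*} [CommRing R] (s : Finset ι)
    (f : ι → R) (n : ℕ) :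
    (∏ i ∈ s, (1 - C (f i) * X)).coeff n = ∑ t ∈ s.powersetCard n, ∏ i ∈ t, -f i := by
  simp_rw [sub_eq_add_neg, ← neg_mul, ← map_neg, prod_one_add, prod_mul_distrib, ← map_prod,
    prod_const, finsetSum_coeff, coeff_C_mul_X_pow, powersetCard_eq_filter, sum_filter, eq_comm]

theorem AddValuation.map_prod {R Γ ι : Type*} [CommRing R] [LinearOrderedAddCommMonoidWithTop Γ]
    (w : AddValuation R Γ) (s : Finset ι) (f : ι → R) :
    w (∏ i ∈ s, f i) = ∑ i ∈ s, w (f i) := by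
  classical
  induction s using Finset.induction_on with
  | empty => simp
  | insert i s hi ih => rw [prod_insert hi, sum_insert hi, w.map_mul, ih]

theorem AddValuation.map_sum_eq_of_lt {R Γ ι : Type*} [Ring R] [LinearOrderedAddCommMonoidWithTop Γ]
    (w : AddValuation R Γ) [DecidableEq ι] {s : Finset ι} {f : ι → R} {j : ι}
    (hj : j ∈ s) (hfj : w (f j) ≠ ⊤) (hf : ∀ i ∈ s \ {j}, w (f j) < w (f i)) :
    w (∑ i ∈ s, f i) = w (f j) := by
  rw [Finset.sum_eq_add_sum_sdiff_singleton_of_mem hj]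
  exact w.map_add_eq_of_lt_left (w.map_lt_sum hfj hf)

theorem exists_addValuation_coe_eq {K : Type*} [Ring K] [Nontrivial K] (v : K → WithTop ℝ)
    (hv0 : ∀ x, v x = ⊤ ↔ x = 0) (hv_mul : ∀ x y, v (x * y) = v x + v y)
    (hv_add : ∀ x y, min (v x) (v y) ≤ v (x + y)) :
    ∃ w : AddValuation K (WithTop ℝ), ⇑w = v := by
  have h1 : v 1 = 0 := by
    obtain ⟨r, hr⟩ := WithTop.ne_top_iff_exists.1 (mt (hv0 1).1 one_ne_zero)
    have := hv_mul 1 1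
    rw [mul_one, ← hr, ← WithTop.coe_add, WithTop.coe_inj] at this
    rw [← hr, show r = 0 by linarith, WithTop.coe_zero]
  exact ⟨AddValuation.of v ((hv0 0).2 rfl) h1 hv_add hv_mul, rfl⟩

theorem exists_addValuation_eq_map_div {K : Type*} [Ring K] [Nontrivial K] (v : K → WithTop ℝ)
    (hv0 : ∀ x, v x = ⊤ ↔ x = 0) (hv_mul : ∀ x y, v (x * y) = v x + v y)
    (hv_add : ∀ x y, min (v x) (v y) ≤ v (x + y)) {c : ℝ} (hc : 0 < c) :
    ∃ w : AddValuation K (WithTop ℝ), ∀ x, w x = WithTop.map (· / c) (v x) := by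
  have hmono : Monotone (WithTop.map (· / c)) :=
    WithTop.monotone_map_iff.2 fun _ _ h => div_le_div_of_nonneg_right h hc.le
  have hmul : ∀ x y, WithTop.map (· / c) (v (x * y)) =
      WithTop.map (· / c) (v x) + WithTop.map (· / c) (v y) := fun x y => by
    rw [hv_mul]
    cases v x <;> cases v y <;> simp [← WithTop.coe_add, add_div]
  obtain ⟨w, hw⟩ := exists_addValuation_coe_eq (fun x => WithTop.map (· / c) (v x))
    (fun x => by simp [hv0]) hmul (fun x y => hmono.map_min ▸ hmono (hv_add x y))
  exact ⟨w, fun x => by rw [hw]⟩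

section NewtonPolygon

variable {d : ℕ} {pts : ℕ → WithTop ℝ}

theorem bddAbove_npVal_set (h0 : pts 0 ≠ ⊤) (hd : pts d ≠ ⊤) {x : ℝ} (hx0 : 0 ≤ x)
    (hxd : x ≤ d) :
    BddAbove {y : ℝ | ∃ m c : ℝ,
      (∀ n ∈ range (d + 1), ((m * n + c : ℝ) : WithTop ℝ) ≤ pts n) ∧ y = m * x + c} := by
  obtain ⟨p₀, hp₀⟩ := WithTop.ne_top_iff_exists.1 h0
  obtain ⟨p, hp⟩ := WithTop.ne_top_iff_exists.1 hd
  refine ⟨max p₀ p, ?_⟩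
  rintro _ ⟨m, c, h, rfl⟩
  have e₀ := h 0 (by simp)
  have e := h d (by simp)
  rw [← hp₀, WithTop.coe_le_coe, Nat.cast_zero, mul_zero, zero_add] at e₀
  rw [← hp, WithTop.coe_le_coe] at e
  rcases le_total m 0 with hm | hm
  · exact le_max_of_le_left (by nlinarith)
  · exact le_max_of_le_right (by nlinarith)

theorem le_npVal (h0 : pts 0 ≠ ⊤) (hd : pts d ≠ ⊤) {m c : ℝ}
    (h : ∀ n ∈ range (d + 1), ((m * n + c : ℝ) : WithTop ℝ) ≤ pts n) {x : ℝ} (hx0 : 0 ≤ x)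
    (hxd : x ≤ d) : m * x + c ≤ npVal d pts x :=
  le_csSup (bddAbove_npVal_set h0 hd hx0 hxd) ⟨m, c, h, rfl⟩

theorem npVal_le {m c : ℝ} (h : ∀ n ∈ range (d + 1), ((m * n + c : ℝ) : WithTop ℝ) ≤ pts n)
    {n : ℕ} (hn : n ≤ d) {r : ℝ} (hr : pts n = r) : npVal d pts n ≤ r :=
  csSup_le ⟨_, m, c, h, rfl⟩ fun _ ⟨_, _, h', hy⟩ =>
    hy ▸ WithTop.coe_le_coe.1 (hr ▸ h' n (mem_range.2 (Nat.lt_succ_of_le hn)))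

theorem isNPVertex_of_slope_lt {k : ℕ} {r m₁ m₂ : ℝ} (hk : k ≤ d) (h0 : pts 0 ≠ ⊤)
    (hd : pts d ≠ ⊤) (hm : m₁ < m₂)
    (h₁ : ∀ n ∈ range (d + 1), ((m₁ * n + (r - m₁ * k) : ℝ) : WithTop ℝ) ≤ pts n)
    (h₂ : ∀ n ∈ range (d + 1), ((m₂ * n + (r - m₂ * k) : ℝ) : WithTop ℝ) ≤ pts n)
    (hr : pts k = r) : IsNPVertex d pts k ∧ npVal d pts k = r := by
  have hval : npVal d pts k = r := le_antisymm (npVal_le h₁ hk hr)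
    (by simpa using le_npVal h0 hd h₁ k.cast_nonneg (Nat.cast_le.2 hk))
  -- a supporting line through `(k, r)` of slope strictly between `m₁` and `m₂` touches only at `k`
  obtain ⟨μ, hμ₁, hμ₂⟩ := exists_between hm
  have hμ : ∀ n ∈ range (d + 1), ((μ * n + (r - μ * k) : ℝ) : WithTop ℝ) ≤ pts n := by
    intro n hn
    rcases le_total n k with hnk | hnk
    · refine le_trans (WithTop.coe_le_coe.2 ?_) (h₁ n hn)
      have : (n : ℝ) ≤ k := by exact_mod_cast hnk
      linarith [mul_nonneg (sub_nonneg.2 hμ₁.le) (sub_nonneg.2 this)]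
    · refine le_trans (WithTop.coe_le_coe.2 ?_) (h₂ n hn)
      have : (k : ℝ) ≤ n := by exact_mod_cast hnk
      linarith [mul_nonneg (sub_nonneg.2 hμ₂.le) (sub_nonneg.2 this)]
  refine ⟨⟨hk, μ, r - μ * k, hμ, by rw [hval]; ring, fun j hj hjk => ?_⟩, hval⟩
  rcases lt_or_gt_of_ne hjk with hjk | hjk
  · have := le_npVal h0 hd h₁ j.cast_nonneg (Nat.cast_le.2 hj)
    have : (j : ℝ) < k := by exact_mod_cast hjk
    linarith [mul_pos (sub_pos.2 hμ₁) (sub_pos.2 this)]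
  · have := le_npVal h0 hd h₂ j.cast_nonneg (Nat.cast_le.2 hj)
    have : (k : ℝ) < j := by exact_mod_cast hjk
    linarith [mul_pos (sub_pos.2 hμ₂) (sub_pos.2 this)]

end NewtonPolygon

theorem exists_gt_forall_le_of_lt {ι : Type*} [Finite ι] (u : ι → ℝ) (s : ℝ) :
    ∃ m, s < m ∧ ∀ i, s < u i → m ≤ u i := by
  have : ∀ᶠ m in 𝓝[>] s, ∀ i, s < u i → m ≤ u i := by
    refine eventually_all.2 fun i => ?_
    by_cases h : s < u i
    · filter_upwards [Ioo_mem_nhdsGT h] with m hm using fun _ => hm.2.le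
    · exact Eventually.of_forall fun _ h' => absurd h' h
  exact (this.and self_mem_nhdsWithin).exists.imp fun _ h => ⟨h.2, h.1⟩

theorem card_filter_mul_add_le_sum {ι : Type*} (t : Finset ι) {u : ι → ℝ} {s m : ℝ}
    (hs : ∀ i ∈ t, s ≤ u i) (hm : ∀ i ∈ t, s < u i → m ≤ u i) :
    #{i ∈ t | u i = s} * s + #{i ∈ t | u i ≠ s} * m ≤ ∑ i ∈ t, u i := by
  rw [← sum_filter_add_sum_filter_not t (u · = s), sum_congr rfl fun i hi => (mem_filter.1 hi).2,
    sum_const, nsmul_eq_mul]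
  have := card_nsmul_le_sum {i ∈ t | u i ≠ s} u m fun i hi => by
    rw [mem_filter] at hi
    exact hm i hi.1 (lt_of_le_of_ne (hs i hi.1) (Ne.symm hi.2))
  rw [nsmul_eq_mul] at this
  linarith

section Symmetric

variable {ι : Type*} [Fintype ι] {u : ι → ℝ} {c : ℝ}

theorem exists_eq_sub_of_map_sub_eq (hsym : univ.val.map (fun i => c - u i) = univ.val.map u)
    (i : ι) : ∃ j, u j = c - u i := by
  have : c - u i ∈ univ.val.map u := hsym ▸ Multiset.mem_map_of_mem _ (mem_univ_val i)
  simpa using this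

theorem eq_half_of_map_sub_eq (hsym : univ.val.map (fun i => c - u i) = univ.val.map u)
    (hs : ∀ i, c / 2 ≤ u i) (i : ι) : u i = c / 2 := by
  obtain ⟨j, hj⟩ := exists_eq_sub_of_map_sub_eq hsym i
  linarith [hs i, hs j]

theorem card_filter_eq_sub_of_map_sub_eq
    (hsym : univ.val.map (fun i => c - u i) = univ.val.map u) (s : ℝ) :
    #{i | u i = c - s} = #{i | u i = s} := by
  have := congrArg (Multiset.count s) hsym
  simp only [Multiset.count_map] at this
  simpa [card_def, filter_val, eq_sub_iff_add_eq, sub_eq_iff_eq_add, add_comm, eq_comm] using this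

theorem two_mul_card_filter_le_of_map_sub_eq
    (hsym : univ.val.map (fun i => c - u i) = univ.val.map u) {s : ℝ} (hs : 2 * s ≠ c) :
    2 * #{i | u i = s} ≤ Fintype.card ι := by
  classical
  have hdisj : Disjoint ({i | u i = s} : Finset ι) ({i | u i = c - s} : Finset ι) :=
    disjoint_filter.2 fun i _ h h' => hs (by linarith)
  have := card_union_of_disjoint hdisj ▸ card_le_univ (_ ∪ _)
  rw [card_filter_eq_sub_of_map_sub_eq hsym] at this
  omega

end Symmetric

theorem AddValuation.map_sub_eq_of_map_div_eq {K ι : Type*} [Field K]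
    (w : AddValuation K (WithTop ℝ)) [Fintype ι] {α : ι → K} {u : ι → ℝ}
    (hu : ∀ i, w (α i) = u i) {q : K} {c : ℝ} (hq : w q = c)
    (hsym : (univ.val.map α).map (q / ·) = univ.val.map α) :
    univ.val.map (fun i => c - u i) = univ.val.map u := by
  have := congrArg (Multiset.map w) hsym
  simp only [Multiset.map_map, Function.comp_def, w.map_div, hq, hu] at this
  refine Multiset.map_injective WithTop.coe_injective ?_
  simpa [Multiset.map_map, Function.comp_def] using this

namespace AddValuation

variable {K ι : Type*} [CommRing K] (w : AddValuation K (WithTop ℝ)) {α : ι → K} {u : ι → ℝ}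

theorem map_prod_neg (hu : ∀ i, w (α i) = u i) (t : Finset ι) :
    w (∏ i ∈ t, -α i) = ↑(∑ i ∈ t, u i) := by
  simp [w.map_prod, hu]

variable [Fintype ι]

theorem le_map_coeff_prod_one_sub_C_mul_X (hu : ∀ i, w (α i) = u i) {n : ℕ} {g : ℝ}
    (h : ∀ t : Finset ι, #t = n → g ≤ ∑ i ∈ t, u i) :
    (g : WithTop ℝ) ≤ w ((∏ i, (1 - C (α i) * X)).coeff n) := by
  rw [coeff_prod_one_sub_C_mul_X]
  refine w.map_le_sum fun t ht => ?_
  rw [map_prod_neg w hu, WithTop.coe_le_coe]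
  exact h t (mem_powersetCard.1 ht).2

theorem map_coeff_prod_one_sub_C_mul_X_eq (hu : ∀ i, w (α i) = u i) (t₀ : Finset ι)
    (h : ∀ t : Finset ι, #t = #t₀ → t ≠ t₀ → ∑ i ∈ t₀, u i < ∑ i ∈ t, u i) :
    w ((∏ i, (1 - C (α i) * X)).coeff #t₀) = ↑(∑ i ∈ t₀, u i) := by
  classical
  rw [coeff_prod_one_sub_C_mul_X, ← map_prod_neg w hu]
  refine w.map_sum_eq_of_lt (mem_powersetCard.2 ⟨subset_univ _, rfl⟩)
    (by simp [map_prod_neg w hu]) fun t ht => ?_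
  obtain ⟨ht, htt₀⟩ := mem_sdiff.1 ht
  rw [map_prod_neg w hu, map_prod_neg w hu, WithTop.coe_lt_coe]
  exact h t (mem_powersetCard.1 ht).2 (by simpa using htt₀)

theorem map_coeff_prod_one_sub_C_mul_X_card_filter_eq (hu : ∀ i, w (α i) = u i) {s : ℝ}
    (hs : ∀ i, s ≤ u i) :
    w ((∏ i, (1 - C (α i) * X)).coeff #{i | u i = s}) = ↑(#{i | u i = s} * s) := by
  classical
  obtain ⟨m, hsm, hm⟩ := exists_gt_forall_le_of_lt u s
  have hA : ∑ i ∈ {i | u i = s}, u i = #{i | u i = s} * s := by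
    rw [sum_congr rfl fun i hi => (mem_filter.1 hi).2, sum_const, nsmul_eq_mul]
  rw [map_coeff_prod_one_sub_C_mul_X_eq w hu _ fun t ht htA => ?_, hA]
  have hne : #{i ∈ t | u i ≠ s} ≠ 0 := fun h => htA <| eq_of_subset_of_card_le
    (fun i hi => by simpa using filter_eq_empty_iff.1 (card_eq_zero.1 h) hi) ht.ge
  have hsum := card_filter_mul_add_le_sum t (fun i _ => hs i) fun i _ => hm i
  have hcard : (#{i ∈ t | u i = s} : ℝ) + #{i ∈ t | u i ≠ s} = #{i | u i = s} := by
    exact_mod_cast (card_filter_add_card_filter_not _).trans ht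
  have hb : (1 : ℝ) ≤ #{i ∈ t | u i ≠ s} := by exact_mod_cast Nat.one_le_iff_ne_zero.2 hne
  rw [hA, ← hcard]
  linarith [mul_pos (by linarith : (0 : ℝ) < #{i ∈ t | u i ≠ s}) (sub_pos.2 hsm)]

theorem isNPVertex_card_filter_eq (hu : ∀ i, w (α i) = u i) {s : ℝ} (hs : ∀ i, s ≤ u i) :
    IsNPVertex (Fintype.card ι) (fun n => w ((∏ i, (1 - C (α i) * X)).coeff n))
        #{i | u i = s} ∧
      npVal (Fintype.card ι) (fun n => w ((∏ i, (1 - C (α i) * X)).coeff n))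
        #{i | u i = s} = #{i | u i = s} * s := by
  classical
  obtain ⟨m, hsm, hm⟩ := exists_gt_forall_le_of_lt u s
  have hline : ∀ m' : ℝ, s ≤ m' → m' ≤ m → ∀ n ∈ range (Fintype.card ι + 1),
      ((m' * n + (#{i | u i = s} * s - m' * #{i | u i = s}) : ℝ) : WithTop ℝ) ≤
        w ((∏ i, (1 - C (α i) * X)).coeff n) := by
    intro m' hsm' hm'm n _
    refine le_map_coeff_prod_one_sub_C_mul_X w hu fun t ht => ?_
    have hsum := card_filter_mul_add_le_sum t (fun i _ => hs i) fun i _ => hm i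
    have hcard : (#{i ∈ t | u i = s} : ℝ) + #{i ∈ t | u i ≠ s} = n := by
      exact_mod_cast (card_filter_add_card_filter_not _).trans ht
    have hle : (#{i ∈ t | u i = s} : ℝ) ≤ #{i | u i = s} := by
      exact_mod_cast card_le_card (filter_subset_filter _ (subset_univ t))
    rw [← hcard]
    linarith [mul_nonneg (sub_nonneg.2 hle) (sub_nonneg.2 hsm'),
      mul_nonneg (by positivity : (0 : ℝ) ≤ #{i ∈ t | u i ≠ s}) (sub_nonneg.2 hm'm)]
  have hfin : ∀ t₀ : Finset ι, (∀ t : Finset ι, #t = #t₀ → t = t₀) →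
      w ((∏ i, (1 - C (α i) * X)).coeff #t₀) ≠ ⊤ := fun t₀ h => by
    rw [map_coeff_prod_one_sub_C_mul_X_eq w hu t₀ fun t ht htt₀ => absurd (h t ht) htt₀]
    exact WithTop.coe_ne_top
  refine isNPVertex_of_slope_lt (card_le_univ _) ?_ ?_ hsm (hline s le_rfl hsm.le)
    (hline m hsm.le le_rfl) (map_coeff_prod_one_sub_C_mul_X_card_filter_eq w hu hs)
  · simpa using hfin ∅ fun t ht => card_eq_zero.1 ht
  · simpa using hfin univ fun t ht => eq_univ_of_card t ht

theorem exists_isNPVertex_of_map_sub_eq (hu : ∀ i, w (α i) = u i) {c : ℝ}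
    (hsym : univ.val.map (fun i => c - u i) = univ.val.map u) (hne : ∃ i, u i ≠ c / 2) :
    ∃ (k : ℕ) (s : ℝ), 1 ≤ k ∧ 2 * k ≤ Fintype.card ι ∧ s < c / 2 ∧
      IsNPVertex (Fintype.card ι) (fun n => w ((∏ i, (1 - C (α i) * X)).coeff n)) k ∧
      npVal (Fintype.card ι) (fun n => w ((∏ i, (1 - C (α i) * X)).coeff n)) k = k * s ∧
      w ((∏ i, (1 - C (α i) * X)).coeff k) = ↑(k * s) := by
  obtain ⟨i₀, hi₀⟩ := hne
  set s := univ.inf' ⟨i₀, mem_univ _⟩ u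
  have hs : ∀ i, s ≤ u i := fun i => inf'_le _ (mem_univ i)
  have hsc : s < c / 2 :=
    not_le.1 fun h => hi₀ (eq_half_of_map_sub_eq hsym (fun i => h.trans (hs i)) i₀)
  obtain ⟨i₁, -, hi₁⟩ := exists_mem_eq_inf' ⟨i₀, mem_univ _⟩ u
  obtain ⟨hvtx, hnp⟩ := w.isNPVertex_card_filter_eq hu hs
  exact ⟨#{i | u i = s}, s, card_pos.2 ⟨i₁, by simp [s, hi₁]⟩,
    two_mul_card_filter_le_of_map_sub_eq hsym (by linarith), hsc, hvtx, hnp,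
    w.map_coeff_prod_one_sub_C_mul_X_card_filter_eq hu hs⟩

end AddValuation

theorem intCast_div_four_notMem_Ioo {k : ℕ} (hk : k ≤ 3) (z : ℤ) :
    (z / 4 : ℝ) ∉ Set.Ioo (5 * k / 12 : ℝ) (k / 2) := by
  rintro ⟨h₁, h₂⟩
  have h₁' : ((5 * k : ℤ) : ℝ) < (3 * z : ℤ) := by push_cast; linarith
  have h₂' : ((z : ℤ) : ℝ) < (2 * k : ℤ) := by push_cast; linarith
  have := Int.cast_lt.1 h₁'
  have := Int.cast_lt.1 h₂'
  omega

theorem newton_polygon_forces_supersingular_five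
    (v : AlgebraicClosure ℚ_[5] → WithTop ℝ)
    (hv0 : ∀ x, v x = ⊤ ↔ x = 0)
    (hv_mul : ∀ x y, v (x * y) = v x + v y)
    (hv_add : ∀ x y, min (v x) (v y) ≤ v (x + y))
    (hv_ext : ∀ x : ℚ_[5], x ≠ 0 →
      v (algebraMap ℚ_[5] (AlgebraicClosure ℚ_[5]) x) = ((x.valuation : ℝ) : WithTop ℝ))
    (a : ℕ) (ha : 0 < a)
    (α : Fin 6 → AlgebraicClosure ℚ_[5]) (hα : ∀ i, α i ≠ 0)
    -- `ord_q := (1/a)·ord_5`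
    (ordq : AlgebraicClosure ℚ_[5] → WithTop ℝ)
    (hordq : ∀ x, ordq x = WithTop.map (fun t => t / (a : ℝ)) (v x))
    -- the coefficients of `P(T) = ∏ᵢ (1 − αᵢ T)`
    (b : ℕ → AlgebraicClosure ℚ_[5])
    (hb : ∀ n, b n =
      (∏ i, (1 - Polynomial.C (α i) * Polynomial.X)).coeff n)
    -- (i) the multiset of the reciprocal roots is stable under `α ↦ q/α`
    (hsym : (Finset.univ.val.map α).map
        (fun x => ((5 : AlgebraicClosure ℚ_[5]) ^ a) / x) = Finset.univ.val.map α)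
    -- (ii) every vertex of the Newton polygon has ordinate a multiple of 1/4
    (hvert : ∀ n : ℕ, IsNPVertex 6 (fun k => ordq (b k)) n →
      ∃ z : ℤ, npVal 6 (fun k => ordq (b k)) (n : ℝ) = (z : ℝ) / 4)
    -- (iii)
    (hb1 : ((5 / 12 : ℝ) : WithTop ℝ) < ordq (b 1))
    (hb2 : ((5 / 6 : ℝ) : WithTop ℝ) < ordq (b 2))
    (hb3 : ((5 / 4 : ℝ) : WithTop ℝ) < ordq (b 3)) :
    ∀ i, ordq (α i) = ((1 / 2 : ℝ) : WithTop ℝ) := by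
  obtain ⟨w, hw⟩ := exists_addValuation_eq_map_div v hv0 hv_mul hv_add (Nat.cast_pos.2 ha)
  obtain rfl : ordq = w := funext fun x => (hordq x).trans (hw x).symm
  have hq : w ((5 : AlgebraicClosure ℚ_[5]) ^ a) = (1 : ℝ) := by
    have h5 : v 5 = (1 : ℝ) := by simpa [map_ofNat] using hv_ext 5 (by norm_num)
    rw [w.map_pow, hw, h5, WithTop.map_coe, ← WithTop.coe_nsmul, nsmul_eq_mul,
      mul_one_div_cancel (Nat.cast_ne_zero.2 ha.ne')]
  choose u hu using fun i => WithTop.ne_top_iff_exists.1 (w.ne_top_iff.2 (hα i))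
  replace hu : ∀ i, w (α i) = u i := fun i => (hu i).symm
  by_contra hne
  obtain ⟨k, s, hk1, hk6, hs, hvtx, hnp, hbk⟩ :=
    w.exists_isNPVertex_of_map_sub_eq hu (w.map_sub_eq_of_map_div_eq hu hq hsym)
      (not_forall.1 fun h => hne fun i => by rw [hu, h])
  simp only [Fintype.card_fin, ← hb] at hk6 hvtx hnp hbk
  have hk3 : k ≤ 3 := by omega
  obtain ⟨z, hz⟩ := hvert k hvtx
  rw [hnp] at hz
  have hlow : ((5 * k / 12 : ℝ) : WithTop ℝ) < w (b k) := by
    interval_cases k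
    · convert hb1 using 2; norm_num
    · convert hb2 using 2; norm_num
    · convert hb3 using 2; norm_num
  rw [hbk, WithTop.coe_lt_coe] at hlow
  have hk1' : (1 : ℝ) ≤ k := by exact_mod_cast hk1
  exact intCast_div_four_notMem_Ioo hk3 z ⟨hz ▸ hlow, hz ▸ by nlinarith⟩
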